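/- arXiv:1305.3432 — 5 statements merged into one kernel-verified Lean document; each statement's English description precedes it below -/
import Mathlib

section
/- Let C, D, E be rigid monoidal categories, let F₁ : C ⥤ D and F₂ : C ⥤ E be (strong) monoidal functors, and let I₁ : D ⥤ C and I₂ : E ⥤ C be left adjoints of F₁ and F₂ respectively (so I₁ ⊣ F₁ and I₂ ⊣ F₂). Then for all objects M of D, N of E and P of C there is a bijection Hom_C(I₁(M) ⊗ I₂(N), P) ≅ Hom_C(I₂(F₂(I₁(M)) ⊗ N), P), natural in P. -/
open CategoryTheory MonoidalCategory Opposite Functor.LaxMonoidal Functor.OplaxMonoidal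


/-- A monoidal functor preserves exact pairings. -/
def exactPairingOfMonoidal {C D : Type*} [Category C] [Category D]
    [MonoidalCategory C] [MonoidalCategory D] (F : C ⥤ D) [F.Monoidal]
    (X Y : C) [ExactPairing X Y] : ExactPairing (F.obj X) (F.obj Y) where
  coevaluation' := ε F ≫ F.map (η_ X Y) ≫ δ F X Y
  evaluation' := μ F Y X ≫ F.map (ε_ X Y) ≫ η F
  coevaluation_evaluation' := by
    simp only [MonoidalCategory.whiskerLeft_comp, MonoidalCategory.comp_whiskerRight,
      Category.assoc]
    have h1 : F.obj Y ◁ δ F X Y ≫ (α_ (F.obj Y) (F.obj X) (F.obj Y)).inv ≫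
        μ F Y X ▷ F.obj Y =
        μ F Y (X ⊗ Y) ≫ F.map (α_ Y X Y).inv ≫ δ F (Y ⊗ X) Y := by
      rw [← cancel_mono (μ F (Y ⊗ X) Y)]
      simp only [Category.assoc]
      rw [← Functor.LaxMonoidal.associativity_inv]
      simp only [Functor.Monoidal.whiskerLeft_δ_μ_assoc, Functor.Monoidal.δ_μ, Category.comp_id]
    slice_lhs 3 5 => rw [h1]
    slice_lhs 2 3 => rw [Functor.LaxMonoidal.μ_natural_right]
    slice_lhs 5 6 => rw [Functor.OplaxMonoidal.δ_natural_left]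
    slice_lhs 3 5 => rw [← F.map_comp, ← F.map_comp, ExactPairing.coevaluation_evaluation]
    rw [F.map_comp]
    simp only [Category.assoc]
    rw [← Functor.LaxMonoidal.right_unitality_assoc, Functor.Monoidal.map_leftUnitor_inv]
    simp only [Category.assoc, Functor.Monoidal.μ_δ_assoc,
      Functor.Monoidal.whiskerRight_ε_η_assoc, Functor.Monoidal.whiskerRight_ε_η,
      Category.comp_id]
  evaluation_coevaluation' := by
    simp only [MonoidalCategory.whiskerLeft_comp, MonoidalCategory.comp_whiskerRight,
      Category.assoc]
    have h1 : δ F X Y ▷ F.obj X ≫ (α_ (F.obj X) (F.obj Y) (F.obj X)).hom ≫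
        F.obj X ◁ μ F Y X =
        μ F (X ⊗ Y) X ≫ F.map (α_ X Y X).hom ≫ δ F X (Y ⊗ X) := by
      rw [← cancel_mono (μ F X (Y ⊗ X))]
      simp only [Category.assoc]
      rw [← Functor.LaxMonoidal.associativity]
      simp only [Functor.Monoidal.whiskerRight_δ_μ_assoc, Functor.Monoidal.δ_μ, Category.comp_id]
    slice_lhs 3 5 => rw [h1]
    slice_lhs 2 3 => rw [Functor.LaxMonoidal.μ_natural_left]
    slice_lhs 5 6 => rw [Functor.OplaxMonoidal.δ_natural_right]
    slice_lhs 3 5 => rw [← F.map_comp, ← F.map_comp, ExactPairing.evaluation_coevaluation]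
    rw [F.map_comp]
    simp only [Category.assoc]
    rw [← Functor.LaxMonoidal.left_unitality_assoc, Functor.Monoidal.map_rightUnitor_inv]
    simp only [Category.assoc, Functor.Monoidal.μ_δ_assoc,
      Functor.Monoidal.whiskerLeft_ε_η_assoc, Functor.Monoidal.whiskerLeft_ε_η,
      Category.comp_id]

lemma tensorLeftHomEquiv_symm_naturality' {C : Type*} [Category C] [MonoidalCategory C]
    {X Y Y' Z Z' : C} [ExactPairing Y Y'] (u : X ⟶ Y ⊗ Z) (h : Z ⟶ Z') :
    (tensorLeftHomEquiv X Y Y' Z').symm (u ≫ Y ◁ h) =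
      (tensorLeftHomEquiv X Y Y' Z).symm u ≫ h := by
  rw [Equiv.symm_apply_eq, tensorLeftHomEquiv_naturality, Equiv.apply_symm_apply]


/-- Let `C, D, E` be rigid monoidal categories, `F₁ : C ⥤ D`, `F₂ : C ⥤ E` strong monoidal
functors with left adjoints `I₁ ⊣ F₁`, `I₂ ⊣ F₂`.  Then for all objects `M` of `D` and `N` of `E`
there is a bijection `Hom_C(I₁ M ⊗ I₂ N, P) ≃ Hom_C(I₂ (F₂ (I₁ M) ⊗ N), P)` natural in `P`,
expressed as an isomorphism of the corresponding coyoneda functors. -/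
theorem hom_tensor_ind_iso_coyoneda
    {C D E : Type*} [Category C] [Category D] [Category E]
    [MonoidalCategory C] [MonoidalCategory D] [MonoidalCategory E]
    [RigidCategory C] [RigidCategory D] [RigidCategory E]
    (F₁ : C ⥤ D) (F₂ : C ⥤ E) [F₁.Monoidal] [F₂.Monoidal]
    (I₁ : D ⥤ C) (I₂ : E ⥤ C) (adj₁ : I₁ ⊣ F₁) (adj₂ : I₂ ⊣ F₂)
    (M : D) (N : E) :
    Nonempty (coyoneda.obj (op (I₁.obj M ⊗ I₂.obj N)) ≅
      coyoneda.obj (op (I₂.obj (F₂.obj (I₁.obj M) ⊗ N)))) := by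
  letI : ExactPairing (F₂.obj (ᘁ(I₁.obj M))) (F₂.obj (I₁.obj M)) :=
    exactPairingOfMonoidal F₂ _ _
  let e : ∀ P : C, (I₁.obj M ⊗ I₂.obj N ⟶ P) ≃ (I₂.obj (F₂.obj (I₁.obj M) ⊗ N) ⟶ P) :=
    fun P =>
      (tensorLeftHomEquiv (I₂.obj N) (ᘁ(I₁.obj M)) (I₁.obj M) P).trans <|
        (adj₂.homEquiv N (MonoidalCategory.tensorObj (ᘁ(I₁.obj M)) P)).trans <|
          ((Iso.refl N).homCongr (Functor.Monoidal.μIso F₂ (ᘁ(I₁.obj M)) P).symm).trans <|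
            ((tensorLeftHomEquiv N (F₂.obj (ᘁ(I₁.obj M))) (F₂.obj (I₁.obj M))
                (F₂.obj P)).symm).trans
              (adj₂.homEquiv (F₂.obj (I₁.obj M) ⊗ N) P).symm
  refine ⟨NatIso.ofComponents (fun P => Equiv.toIso (e P)) ?_⟩
  intro P Q h
  ext f
  show e Q (f ≫ h) = e P f ≫ h
  simp only [e, Equiv.trans_apply, Iso.homCongr_apply, Iso.refl_inv, Iso.symm_hom,
    Functor.Monoidal.μIso_inv, Category.id_comp]
  rw [tensorLeftHomEquiv_naturality, Adjunction.homEquiv_naturality_right,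
    Category.assoc, ← Functor.OplaxMonoidal.δ_natural_right, ← Category.assoc,
    tensorLeftHomEquiv_symm_naturality', Adjunction.homEquiv_naturality_right_symm]
end

section
/- Let C, D, E be rigid monoidal categories, let F₁ : C ⥤ D and F₂ : C ⥤ E be (strong) monoidal functors, and let I₁ : D ⥤ C and I₂ : E ⥤ C be left adjoints of F₁ and F₂ respectively. Then for all objects M of D and N of E there is an isomorphism in C: I₁(M) ⊗ I₂(N) ≅ I₂(F₂(I₁(M)) ⊗ N). -/
/-!
Tensoring with `X` on the left is left adjoint to tensoring with its left dual `ᘁX`, and a strong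
monoidal functor `F` carries the pairing between `ᘁX` and `X` to one between `F ᘁX` and `F X`.
Hence, for `I ⊣ F`, both `N ↦ X ⊗ I N` and `N ↦ I (F X ⊗ N)` are left adjoint to
`P ↦ F (ᘁX ⊗ P) ≅ F ᘁX ⊗ F P`, and left adjoints are unique up to isomorphism. The theorem is the
case `X = I₁ M`.
-/

open CategoryTheory MonoidalCategory Functor.LaxMonoidal Functor.OplaxMonoidal

namespace CategoryTheory

variable {C D : Type*} [Category C] [Category D] [MonoidalCategory C] [MonoidalCategory D]

noncomputable abbrev Functor.mapExactPairing (F : C ⥤ D) [F.Monoidal] (X Y : C)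
    [ExactPairing X Y] : ExactPairing (F.obj X) (F.obj Y) where
  coevaluation' := ε F ≫ F.map (η_ X Y) ≫ δ F X Y
  evaluation' := μ F Y X ≫ F.map (ε_ X Y) ≫ η F
  coevaluation_evaluation' := by
    -- Writing `α_` of images through `F.map α_`, the zigzag becomes `F` of the zigzag for `X, Y`.
    rw [Functor.Monoidal.map_associator_inv']
    simp only [MonoidalCategory.whiskerLeft_comp, comp_whiskerRight, Category.assoc,
      Functor.Monoidal.whiskerLeft_δ_μ_assoc, Functor.Monoidal.whiskerRight_δ_μ_assoc]
    rw [μ_natural_right_assoc, δ_natural_left_assoc]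
    simp only [← Functor.map_comp_assoc]
    simp
  evaluation_coevaluation' := by
    rw [Functor.Monoidal.map_associator']
    simp only [MonoidalCategory.whiskerLeft_comp, comp_whiskerRight, Category.assoc,
      Functor.Monoidal.whiskerLeft_δ_μ_assoc, Functor.Monoidal.whiskerRight_δ_μ_assoc]
    rw [μ_natural_left_assoc, δ_natural_right_assoc]
    simp only [← Functor.map_comp_assoc]
    simp

noncomputable def Adjunction.projectionIso {F : C ⥤ D} [F.Monoidal] {I : D ⥤ C} (adj : I ⊣ F)
    (X : C) [HasLeftDual X] : I ⋙ tensorLeft X ≅ tensorLeft (F.obj X) ⋙ I :=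
  letI := F.mapExactPairing (ᘁX) X
  ((adj.comp (tensorLeftAdjunction (ᘁX) X)).ofNatIsoRight
      (Functor.Monoidal.commTensorLeft F (ᘁX)).symm).leftAdjointUniq
    ((tensorLeftAdjunction (F.obj (ᘁX)) (F.obj X)).comp adj)

end CategoryTheory

theorem ind_tensor_ind_iso_general
    {C D E : Type*} [Category C] [Category D] [Category E]
    [MonoidalCategory C] [MonoidalCategory E]
    [RigidCategory C]
    (F₂ : C ⥤ E) [F₂.Monoidal]
    (I₁ : D ⥤ C) (I₂ : E ⥤ C) (adj₂ : I₂ ⊣ F₂)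
    (M : D) (N : E) :
    Nonempty (I₁.obj M ⊗ I₂.obj N ≅ I₂.obj (F₂.obj (I₁.obj M) ⊗ N)) :=
  ⟨(adj₂.projectionIso (I₁.obj M)).app N⟩

/-- Let `C, D, E` be rigid monoidal categories, `F₁ : C ⥤ D`, `F₂ : C ⥤ E` strong monoidal
functors with left adjoints `I₁ ⊣ F₁`, `I₂ ⊣ F₂`.  Then for all objects `M` of `D` and `N` of `E`
there is an isomorphism `I₁ M ⊗ I₂ N ≅ I₂ (F₂ (I₁ M) ⊗ N)` in `C`. -/
theorem ind_tensor_ind_iso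
    {C D E : Type*} [Category C] [Category D] [Category E]
    [MonoidalCategory C] [MonoidalCategory D] [MonoidalCategory E]
    [RigidCategory C] [RigidCategory D] [RigidCategory E]
    (F₁ : C ⥤ D) (F₂ : C ⥤ E) [F₁.Monoidal] [F₂.Monoidal]
    (I₁ : D ⥤ C) (I₂ : E ⥤ C) (adj₁ : I₁ ⊣ F₁) (adj₂ : I₂ ⊣ F₂)
    (M : D) (N : E) :
    Nonempty (I₁.obj M ⊗ I₂.obj N ≅ I₂.obj (F₂.obj (I₁.obj M) ⊗ N)) :=
  ind_tensor_ind_iso_general F₂ I₁ I₂ adj₂ M N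
end

section
/- Let C and D be rigid monoidal categories, let F : C ⥤ D be a (strong) monoidal functor, and let I : D ⥤ C be a left adjoint of F (so I ⊣ F). Then for every object M of D and every object V of C there is an isomorphism in C: I(M) ⊗ V ≅ I(M ⊗ F(V)) (the projection formula). -/
open CategoryTheory MonoidalCategory

/-!
A strong monoidal functor `F` carries the exact pairing of `V` with `Vᘁ` to one of `F V` with
`F Vᘁ`. Hence `tensorRight (F V) ⋙ I` is left adjoint to
`F ⋙ tensorRight (F Vᘁ) ≅ tensorRight Vᘁ ⋙ F`, which is also right adjoint to
`I ⋙ tensorRight V`; uniqueness of left adjoints gives the projection formula.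
-/

namespace CategoryTheory.Functor.Monoidal

open LaxMonoidal OplaxMonoidal

variable {C D : Type*} [Category C] [Category D] [MonoidalCategory C] [MonoidalCategory D]
  (F : C ⥤ D) [F.Monoidal]

theorem whiskerLeft_map_comp_associator_inv_comp_whiskerRight_map {U V W X Y : C}
    (f : U ⟶ X ⊗ Y) (g : V ⊗ X ⟶ W) :
    F.obj V ◁ F.map f ≫ F.obj V ◁ δ F X Y ≫ (α_ _ _ _).inv ≫
        μ F V X ▷ F.obj Y ≫ F.map g ▷ F.obj Y =
      μ F V U ≫ F.map (V ◁ f ≫ (α_ V X Y).inv ≫ g ▷ Y) ≫ δ F W Y := by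
  simp only [F.map_comp, map_whiskerLeft, map_associator_inv, map_whiskerRight, Category.assoc,
    μ_δ_assoc, μ_δ, Category.comp_id]

theorem whiskerRight_map_comp_associator_hom_comp_whiskerLeft_map {U V W X Y : C}
    (f : U ⟶ X ⊗ Y) (g : Y ⊗ V ⟶ W) :
    F.map f ▷ F.obj V ≫ δ F X Y ▷ F.obj V ≫ (α_ _ _ _).hom ≫
        F.obj X ◁ μ F Y V ≫ F.obj X ◁ F.map g =
      μ F U V ≫ F.map (f ▷ V ≫ (α_ X Y V).hom ≫ X ◁ g) ≫ δ F X W := by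
  simp only [F.map_comp, map_whiskerLeft, map_associator, map_whiskerRight, Category.assoc,
    μ_δ_assoc, μ_δ, Category.comp_id]

abbrev mapExactPairing (X Y : C) [ExactPairing X Y] : ExactPairing (F.obj X) (F.obj Y) where
  coevaluation' := ε F ≫ F.map (η_ X Y) ≫ δ F X Y
  evaluation' := μ F Y X ≫ F.map (ε_ X Y) ≫ η F
  coevaluation_evaluation' := by
    simp [reassoc_of% whiskerLeft_map_comp_associator_inv_comp_whiskerRight_map]
  evaluation_coevaluation' := by
    simp [reassoc_of% whiskerRight_map_comp_associator_hom_comp_whiskerLeft_map]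

end CategoryTheory.Functor.Monoidal

namespace CategoryTheory.Adjunction

variable {C D : Type*} [Category C] [Category D] [MonoidalCategory C] [MonoidalCategory D]
  {F : C ⥤ D} [F.Monoidal] {I : D ⥤ C}

def compTensorRightIso (adj : I ⊣ F) (V W : C) [ExactPairing V W] :
    I ⋙ tensorRight V ≅ tensorRight (F.obj V) ⋙ I :=
  letI := Functor.Monoidal.mapExactPairing F V W
  (adj.comp (tensorRightAdjunction V W)).leftAdjointUniq
    (((tensorRightAdjunction (F.obj V) (F.obj W)).comp adj).ofNatIsoRight
      (Functor.Monoidal.commTensorRight F W))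

end CategoryTheory.Adjunction

theorem projection_formula_general
    {C D : Type*} [Category C] [Category D]
    [MonoidalCategory C] [MonoidalCategory D]
    [RigidCategory C]
    (F : C ⥤ D) [F.Monoidal] (I : D ⥤ C) (adj : I ⊣ F)
    (M : D) (V : C) :
    Nonempty (I.obj M ⊗ V ≅ I.obj (M ⊗ F.obj V)) :=
  ⟨(adj.compTensorRightIso V Vᘁ).app M⟩

/-- The projection formula: if `C, D` are rigid monoidal categories, `F : C ⥤ D` is a strong
monoidal functor and `I : D ⥤ C` is a left adjoint of `F`, then for every object `M` of `D` and
every object `V` of `C` there is an isomorphism `I M ⊗ V ≅ I (M ⊗ F V)` in `C`. -/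
theorem projection_formula
    {C D : Type*} [Category C] [Category D]
    [MonoidalCategory C] [MonoidalCategory D]
    [RigidCategory C] [RigidCategory D]
    (F : C ⥤ D) [F.Monoidal] (I : D ⥤ C) (adj : I ⊣ F)
    (M : D) (V : C) :
    Nonempty (I.obj M ⊗ V ≅ I.obj (M ⊗ F.obj V)) :=
  projection_formula_general F I adj M V
end

section
/- Let F be a group acting on a group G by group automorphisms, let g, h ∈ G, and let F_g and F_h denote the stabilizers in F of g and h. Let D ⊆ F be a complete set of representatives for the double cosets F_h\F/F_g. Then the pointwise product of orbits satisfies orbit_F(g) · orbit_F(h) = ⋃_{x ∈ D} orbit_F((x•g)·h), where orbit_F(g) · orbit_F(h) = {a·b : a ∈ orbit_F(g), b ∈ orbit_F(h)}. -/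
open scoped Pointwise

namespace MulAction

variable {F G : Type*} [Group F] [Group G] [MulDistribMulAction F G]

/-- Since `b` acts by an automorphism, `(a • g) * (b • h) = b • ((b⁻¹ * a) • g * h)`. -/
theorem orbit_mul_orbit_eq_iUnion_orbit_smul_mul (g h : G) :
    orbit F g * orbit F h = ⋃ x : F, orbit F ((x • g) * h) := by
  ext c
  simp only [Set.mem_mul, Set.mem_iUnion, mem_orbit_iff]
  constructor
  · rintro ⟨_, ⟨a, rfl⟩, _, ⟨b, rfl⟩, rfl⟩
    exact ⟨b⁻¹ * a, b, by rw [smul_mul', ← mul_smul, mul_inv_cancel_left]⟩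
  · rintro ⟨x, b, rfl⟩
    exact ⟨(b * x) • g, ⟨b * x, rfl⟩, b • h, ⟨b, rfl⟩, by rw [smul_mul', mul_smul]⟩

theorem orbit_smul_mul_eq_of_mem_doubleCoset {g h : G} {x y : F}
    (hy : y ∈ DoubleCoset.doubleCoset x (stabilizer F h : Set F) (stabilizer F g : Set F)) :
    orbit F ((y • g) * h) = orbit F ((x • g) * h) := by
  obtain ⟨s, hs : s • h = h, t, ht : t • g = g, rfl⟩ := DoubleCoset.mem_doubleCoset.1 hy
  have : (s * x * t) • g * h = s • ((x • g) * h) := by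
    rw [smul_mul', hs, mul_smul, mul_smul, ht]
  rw [this, orbit_smul]

end MulAction

/-- Let `F` act on a group `G` by group automorphisms, let `g, h ∈ G`, and let `D ⊆ F` be a
complete set of representatives for the double cosets `F_h\F/F_g` of the stabilizers of `g`
and `h`.  Then `orbit_F(g) · orbit_F(h) = ⋃_{x ∈ D} orbit_F((x • g) * h)` (pointwise product of
subsets of `G`). -/
theorem orbit_mul_orbit_eq_iUnion {F G : Type*} [Group F] [Group G] [MulDistribMulAction F G]
    (g h : G) (D : Set F)
    (hD : ∀ y : F, ∃! x, x ∈ D ∧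
      y ∈ DoubleCoset.doubleCoset x (MulAction.stabilizer F h : Set F) (MulAction.stabilizer F g : Set F)) :
    MulAction.orbit F g * MulAction.orbit F h = ⋃ x ∈ D, MulAction.orbit F ((x • g) * h) := by
  rw [MulAction.orbit_mul_orbit_eq_iUnion_orbit_smul_mul]
  refine subset_antisymm (Set.iUnion_subset fun y => ?_) (Set.iUnion₂_subset_iUnion _ _)
  obtain ⟨x, ⟨hxD, hy⟩, -⟩ := hD y
  rw [MulAction.orbit_smul_mul_eq_of_mem_doubleCoset hy]
  exact Set.subset_biUnion_of_mem (u := fun x => MulAction.orbit F ((x • g) * h)) hxD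
end

section
/- Let F be a group acting on a group G by group automorphisms, let g, h ∈ G, let F_g and F_h denote the stabilizers in F of g and h, and fix x ∈ F. Set z := (x•g)·h, let S := F_z be the stabilizer of z in F, and let S act diagonally on the set P := {(a, b) ∈ orbit_F(g) × orbit_F(h) : a·b = z}. Then the assignment sending the S-orbit of a pair ((r•g), (s•h)) ∈ P (where r, s ∈ F and (r•g)(s•h) = z) to the double coset F_h s⁻¹r F_g is a well-defined bijection from the set of S-orbits of P onto the set of double cosets F_h y F_g (y ∈ F) such that (y•g)·h ∈ orbit_F(z). -/
/-!
The pair `(r • g, s • h)` determines `s⁻¹ * r` up to `F_h` on the left and `F_g` on the right,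
and replacing `(r, s)` by `(t * r, t * s)` does not change `s⁻¹ * r`; conversely, pairs whose
double cosets agree are related by some `t ∈ F`. Such a `t` carries one factorisation of `z` to
another, hence fixes `z`: the diagonal `F`-orbits of these pairs are exactly their `F_z`-orbits.
-/

open MulAction

section DiagonalOrbits

variable {F α β : Type*} [Group F] [MulAction F α] [MulAction F β]

theorem doubleCoset_mk_inv_mul_eq_iff (a : α) (b : β) (r s r' s' : F) :
    DoubleCoset.mk (stabilizer F b) (stabilizer F a) (s⁻¹ * r) =
        DoubleCoset.mk (stabilizer F b) (stabilizer F a) (s'⁻¹ * r') ↔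
      ∃ t : F, t • r • a = r' • a ∧ t • s • b = s' • b := by
  rw [DoubleCoset.eq]
  constructor
  · rintro ⟨u, hu, v, hv, huv⟩
    have hr' : r' = s' * u * s⁻¹ * r * v := by
      rw [← mul_inv_cancel_left s' r', huv]
      group
    refine ⟨s' * u * s⁻¹, ?_, ?_⟩
    · rw [smul_smul, hr', mul_smul _ v, mem_stabilizer_iff.mp hv]
    · rw [smul_smul, inv_mul_cancel_right, mul_smul, mem_stabilizer_iff.mp hu]
  · rintro ⟨t, ha, hb⟩
    refine ⟨s'⁻¹ * t * s, ?_, r⁻¹ * t⁻¹ * r', ?_, by group⟩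
    · rw [mem_stabilizer_iff, mul_smul, mul_smul, hb, inv_smul_smul]
    · rw [mem_stabilizer_iff, mul_smul, mul_smul, ← ha, inv_smul_smul, inv_smul_smul]

noncomputable def orbitPairDoubleCoset {a a₁ : α} {b b₁ : β}
    (ha : a₁ ∈ orbit F a) (hb : b₁ ∈ orbit F b) :
    DoubleCoset.Quotient (stabilizer F b : Set F) (stabilizer F a) :=
  DoubleCoset.mk _ _ ((mem_orbit_iff.mp hb).choose⁻¹ * (mem_orbit_iff.mp ha).choose)

theorem orbitPairDoubleCoset_eq {a a₁ : α} {b b₁ : β}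
    (ha : a₁ ∈ orbit F a) (hb : b₁ ∈ orbit F b) {r s : F} (hr : r • a = a₁) (hs : s • b = b₁) :
    orbitPairDoubleCoset ha hb = DoubleCoset.mk (stabilizer F b) (stabilizer F a) (s⁻¹ * r) :=
  (doubleCoset_mk_inv_mul_eq_iff a b _ _ r s).mpr
    ⟨1, by rw [one_smul, (mem_orbit_iff.mp ha).choose_spec, hr],
      by rw [one_smul, (mem_orbit_iff.mp hb).choose_spec, hs]⟩

theorem orbitPairDoubleCoset_eq_iff {a a₁ a₂ : α} {b b₁ b₂ : β}
    (ha₁ : a₁ ∈ orbit F a) (hb₁ : b₁ ∈ orbit F b) (ha₂ : a₂ ∈ orbit F a) (hb₂ : b₂ ∈ orbit F b) :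
    orbitPairDoubleCoset ha₁ hb₁ = orbitPairDoubleCoset ha₂ hb₂ ↔
      ∃ t : F, t • a₁ = a₂ ∧ t • b₁ = b₂ := by
  obtain ⟨r₁, rfl⟩ := mem_orbit_iff.mp ha₁
  obtain ⟨s₁, rfl⟩ := mem_orbit_iff.mp hb₁
  obtain ⟨r₂, rfl⟩ := mem_orbit_iff.mp ha₂
  obtain ⟨s₂, rfl⟩ := mem_orbit_iff.mp hb₂
  rw [orbitPairDoubleCoset_eq ha₁ hb₁ rfl rfl, orbitPairDoubleCoset_eq ha₂ hb₂ rfl rfl]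
  exact doubleCoset_mk_inv_mul_eq_iff a b r₁ s₁ r₂ s₂

end DiagonalOrbits

section ProductPairs

variable {F G : Type*} [Group F] [Group G] [MulDistribMulAction F G] (g h z : G)

theorem exists_doubleCoset_mk_eq_orbitPairDoubleCoset {a b : G}
    (ha : a ∈ orbit F g) (hb : b ∈ orbit F h) (hab : a * b = z) :
    ∃ y : F, DoubleCoset.mk (stabilizer F h) (stabilizer F g) y = orbitPairDoubleCoset ha hb ∧
      (y • g) * h ∈ orbit F z := by
  obtain ⟨r, hr⟩ := mem_orbit_iff.mp ha
  obtain ⟨s, hs⟩ := mem_orbit_iff.mp hb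
  refine ⟨s⁻¹ * r, (orbitPairDoubleCoset_eq ha hb hr hs).symm, s⁻¹, ?_⟩
  show s⁻¹ • z = _
  rw [← hab, ← hr, ← hs, smul_mul', smul_smul, inv_smul_smul]

noncomputable def orbitPairsToDoubleCosets :
    Quot (fun p q : {p : G × G // p.1 ∈ orbit F g ∧ p.2 ∈ orbit F h ∧ p.1 * p.2 = z} =>
        ∃ t ∈ stabilizer F z, t • p.val.1 = q.val.1 ∧ t • p.val.2 = q.val.2) →
      {d : DoubleCoset.Quotient (stabilizer F h : Set F) (stabilizer F g : Set F) //
        ∃ y : F, DoubleCoset.mk (stabilizer F h) (stabilizer F g) y = d ∧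
          (y • g) * h ∈ orbit F z} :=
  Quot.lift
    (fun p => ⟨orbitPairDoubleCoset p.2.1 p.2.2.1,
      exists_doubleCoset_mk_eq_orbitPairDoubleCoset g h z p.2.1 p.2.2.1 p.2.2.2⟩)
    (fun p q ⟨t, _, hpq⟩ => Subtype.ext <|
      (orbitPairDoubleCoset_eq_iff p.2.1 p.2.2.1 q.2.1 q.2.2.1).mpr ⟨t, hpq⟩)

theorem orbitPairsToDoubleCosets_mk
    (p : {p : G × G // p.1 ∈ orbit F g ∧ p.2 ∈ orbit F h ∧ p.1 * p.2 = z}) :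
    (orbitPairsToDoubleCosets g h z (Quot.mk _ p) : DoubleCoset.Quotient _ _) =
      orbitPairDoubleCoset p.2.1 p.2.2.1 :=
  rfl

theorem orbitPairsToDoubleCosets_bijective :
    Function.Bijective (orbitPairsToDoubleCosets (F := F) g h z) := by
  constructor
  · rintro ⟨p, _, _, hp⟩ ⟨q, _, _, hq⟩ hpq
    replace hpq := congrArg Subtype.val hpq
    rw [orbitPairsToDoubleCosets_mk, orbitPairsToDoubleCosets_mk] at hpq
    obtain ⟨t, h1, h2⟩ := (orbitPairDoubleCoset_eq_iff _ _ _ _).mp hpq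
    refine Quot.sound ⟨t, ?_, h1, h2⟩
    rw [mem_stabilizer_iff, ← hp, smul_mul', h1, h2, hq, hp]
  · rintro ⟨d, y, rfl, u, hu⟩
    have hu : u • z = (y • g) * h := hu
    have hz : ((u⁻¹ * y) • g) * (u⁻¹ • h) = z := by
      rw [mul_smul, ← smul_mul', ← hu, inv_smul_smul]
    refine ⟨Quot.mk _ ⟨(_, _), mem_orbit g (u⁻¹ * y), mem_orbit h u⁻¹, hz⟩, Subtype.ext ?_⟩
    rw [orbitPairsToDoubleCosets_mk, orbitPairDoubleCoset_eq _ _ rfl rfl, inv_inv,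
      mul_inv_cancel_left]

end ProductPairs

/-- Let `F` act on a group `G` by group automorphisms, `g, h ∈ G`, `x ∈ F`, and set
`z := (x • g) * h`.  Let `S := F_z` be the stabilizer of `z`, acting diagonally on the set
`P := {(a, b) ∈ orbit_F(g) × orbit_F(h) | a * b = z}` (the set of `S`-orbits of `P` is encoded
as the quotient `Quot` by the orbit relation).  Then the assignment sending the `S`-orbit of a
pair `((r • g), (s • h)) ∈ P` to the double coset `F_h (s⁻¹ * r) F_g` is a well-defined
bijection from the set of `S`-orbits of `P` onto the set of double cosets `F_h y F_g` with
`(y • g) * h ∈ orbit_F(z)`. -/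
theorem orbit_pairs_equiv_dosets {F G : Type*} [Group F] [Group G] [MulDistribMulAction F G]
    (g h : G) (x : F) :
    ∃ e : Quot (fun (p q : {p : G × G // p.1 ∈ orbit F g ∧ p.2 ∈ orbit F h ∧
            p.1 * p.2 = (x • g) * h}) =>
          ∃ s ∈ stabilizer F ((x • g) * h), s • p.val.1 = q.val.1 ∧ s • p.val.2 = q.val.2) ≃
        {d : DoubleCoset.Quotient (stabilizer F h : Set F) (stabilizer F g : Set F) //
          ∃ y : F, DoubleCoset.mk (stabilizer F h) (stabilizer F g) y = d ∧
            (y • g) * h ∈ orbit F ((x • g) * h)},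
      ∀ (r s : F) (hp : (r • g) * (s • h) = (x • g) * h),
        (e (Quot.mk _ ⟨(r • g, s • h), mem_orbit g r, mem_orbit h s, hp⟩) : 
            DoubleCoset.Quotient (stabilizer F h : Set F) (stabilizer F g : Set F)) =
          DoubleCoset.mk (stabilizer F h) (stabilizer F g) (s⁻¹ * r) :=
  ⟨.ofBijective _ (orbitPairsToDoubleCosets_bijective g h _),
    fun _ _ _ =>
      (orbitPairsToDoubleCosets_mk g h _ _).trans (orbitPairDoubleCoset_eq _ _ rfl rfl)⟩
end
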